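/- Let β be real with β > 0 and β ≠ 1, let y > 0, let J be a finite index set, and for each j ∈ J let c_j ≥ 0, w_j > 0 and w′_j > 0 be reals. Set x′ = Σ_{j∈J} w′_j·c_j and assume x′ > 0. Then ď_β(y, Σ_{j∈J} w_j·c_j) ≤ Σ_{j∈J} (w′_j·c_j / x′) · ď_β(y, x′·w_j / w′_j). -/

import Mathlib

/-!
For every `β ≠ 1` and `y ≥ 0` the function `ď_β(y, ·)` is convex on `(0, ∞)`: its first term is
`x^β/β` (convex for `β > 1`), and its second is a nonnegative multiple of `x^(β-1)` (convex for
`β < 1`) or of `-x^(β-1)` (convex for `1 < β ≤ 2`). The inequality is then Jensen's inequality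
for the weights `w′_j c_j / x′`, which sum to `1`, at the points `x′ w_j / w′_j`, whose weighted
mean is `Σ_j w_j c_j`.
-/

open Real

/-- The convex part `ď_β(y, x) = [β>1]·x^β/β − [β≤2]·y·x^(β−1)/(β−1) + y^β/(β(β−1))`. -/
noncomputable def betaDivCheck (β y x : ℝ) : ℝ :=
  (if 1 < β then x ^ β / β else 0) - (if β ≤ 2 then y * x ^ (β - 1) / (β - 1) else 0)
    + y ^ β / (β * (β - 1))

open Set

lemma convexOn_rpow_of_nonpos {p : ℝ} (hp : p ≤ 0) :
    ConvexOn ℝ (Ioi 0) fun x : ℝ ↦ x ^ p := by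
  refine convexOn_of_hasDerivWithinAt2_nonneg (convex_Ioi 0)
    (f' := fun x ↦ p * x ^ (p - 1)) (f'' := fun x ↦ p * ((p - 1) * x ^ (p - 1 - 1)))
    (fun x hx ↦ (continuousAt_rpow_const x p (Or.inl (ne_of_gt hx))).continuousWithinAt)
    ?_ ?_ ?_ <;> rw [interior_Ioi] <;> intro x (hx : 0 < x)
  · exact (hasDerivAt_rpow_const (Or.inl hx.ne')).hasDerivWithinAt
  · exact ((hasDerivAt_rpow_const (Or.inl hx.ne')).const_mul p).hasDerivWithinAt
  · rw [← mul_assoc]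
    exact mul_nonneg (mul_nonneg_of_nonpos_of_nonpos hp (by linarith)) (rpow_nonneg hx.le _)

lemma convexOn_rpow_div_self {β : ℝ} (hβ : 1 < β) : ConvexOn ℝ (Ici 0) fun x : ℝ ↦ x ^ β / β := by
  simpa only [smul_eq_mul, div_eq_inv_mul] using
    (convexOn_rpow hβ.le).smul (inv_nonneg.2 (zero_le_one.trans hβ.le))

lemma convexOn_neg_mul_rpow_sub_one_div {β y : ℝ} (hβ1 : β ≠ 1) (hβ2 : β ≤ 2) (hy : 0 ≤ y) :
    ConvexOn ℝ (Ioi 0) fun x : ℝ ↦ -(y * x ^ (β - 1) / (β - 1)) := by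
  rcases hβ1.lt_or_gt with hlt | hgt
  · have := (convexOn_rpow_of_nonpos (p := β - 1) (by linarith)).smul
      (div_nonneg hy (by linarith : (0:ℝ) ≤ 1 - β))
    refine this.congr fun x _ ↦ ?_
    simp only [smul_eq_mul]
    field_simp
    ring
  · have := ((concaveOn_rpow (p := β - 1) (by linarith) (by linarith)).subset Ioi_subset_Ici_self
      (convex_Ioi 0)).neg.smul (div_nonneg hy (by linarith : (0:ℝ) ≤ β - 1))
    refine this.congr fun x _ ↦ ?_
    simp only [smul_eq_mul, Pi.neg_apply]
    ring

lemma convexOn_betaDivCheck {β y : ℝ} (hβ1 : β ≠ 1) (hy : 0 ≤ y) :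
    ConvexOn ℝ (Ioi 0) (betaDivCheck β y) := by
  have hpow : ConvexOn ℝ (Ioi 0) fun x : ℝ ↦ if 1 < β then x ^ β / β else 0 := by
    by_cases h : 1 < β
    · simpa only [h, if_true] using
        (convexOn_rpow_div_self h).subset Ioi_subset_Ici_self (convex_Ioi 0)
    · simpa only [h, if_false] using convexOn_const (0 : ℝ) (convex_Ioi 0)
  have hcross : ConvexOn ℝ (Ioi 0)
      fun x : ℝ ↦ -(if β ≤ 2 then y * x ^ (β - 1) / (β - 1) else 0) := by
    by_cases h : β ≤ 2
    · simpa only [h, if_true] using convexOn_neg_mul_rpow_sub_one_div hβ1 h hy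
    · simpa only [h, if_false, neg_zero] using convexOn_const (0 : ℝ) (convex_Ioi 0)
  refine ((hpow.add hcross).add (convexOn_const (y ^ β / (β * (β - 1))) (convex_Ioi 0))).congr
    fun x _ ↦ ?_
  simp only [betaDivCheck, Pi.add_apply]
  ring

theorem ConvexOn.map_sum_mul_le_sum_div_mul {J : Type*} [Fintype J] {f : ℝ → ℝ}
    (hf : ConvexOn ℝ (Ioi 0) f) {c w w' : J → ℝ} (hc : ∀ j, 0 ≤ c j) (hw : ∀ j, 0 < w j)
    (hw' : ∀ j, 0 < w' j) {x' : ℝ} (hx' : x' = ∑ j, w' j * c j) (hx'pos : 0 < x') :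
    f (∑ j, w j * c j) ≤ ∑ j, (w' j * c j / x') * f (x' * w j / w' j) := by
  have hweights : ∑ j, w' j * c j / x' = 1 := by
    rw [← Finset.sum_div, ← hx', div_self hx'pos.ne']
  have hmean : ∑ j, w' j * c j / x' * (x' * w j / w' j) = ∑ j, w j * c j := by
    refine Finset.sum_congr rfl fun j _ ↦ ?_
    have := (hw' j).ne'
    field_simp
  simpa only [smul_eq_mul, hmean] using
    hf.map_sum_le (fun j _ ↦ div_nonneg (mul_nonneg (hw' j).le (hc j)) hx'pos.le) hweights
      fun j _ ↦ div_pos (mul_pos hx'pos (hw j)) (hw' j)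

theorem betaDivCheck_jensen_general {J : Type*} [Fintype J]
    (β : ℝ) (hβ1 : β ≠ 1) (y : ℝ) (hy : 0 < y)
    (c w w' : J → ℝ) (hc : ∀ j, 0 ≤ c j) (hw : ∀ j, 0 < w j) (hw' : ∀ j, 0 < w' j)
    (x' : ℝ) (hx' : x' = ∑ j, w' j * c j) (hx'pos : 0 < x') :
    betaDivCheck β y (∑ j, w j * c j)
      ≤ ∑ j, (w' j * c j / x') * betaDivCheck β y (x' * w j / w' j) :=
  (convexOn_betaDivCheck hβ1 hy.le).map_sum_mul_le_sum_div_mul hc hw hw' hx' hx'pos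

/-- Jensen-inequality step: for `x′ = Σ_j w′_j c_j > 0`,
`ď_β(y, Σ_j w_j c_j) ≤ Σ_j (w′_j c_j / x′) · ď_β(y, x′ w_j / w′_j)`. -/
theorem betaDivCheck_jensen {J : Type*} [Fintype J]
    (β : ℝ) (hβ : 0 < β) (hβ1 : β ≠ 1) (y : ℝ) (hy : 0 < y)
    (c w w' : J → ℝ) (hc : ∀ j, 0 ≤ c j) (hw : ∀ j, 0 < w j) (hw' : ∀ j, 0 < w' j)
    (x' : ℝ) (hx' : x' = ∑ j, w' j * c j) (hx'pos : 0 < x') :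
    betaDivCheck β y (∑ j, w j * c j)
      ≤ ∑ j, (w' j * c j / x') * betaDivCheck β y (x' * w j / w' j) :=
  betaDivCheck_jensen_general β hβ1 y hy c w w' hc hw hw' x' hx' hx'pos
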